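/- arXiv:2604.03564 — 5 statements merged into one kernel-verified Lean document; each statement's English description precedes it below -/
import Mathlib

section
/- Let s, t be coprime natural numbers with s + t ≥ 1, and define n_0 = 0 and n_{k+1} = n_k + s if n_k + s ≤ s + t − 1, else n_{k+1} = n_k − t. Then {n_0, n_1, ..., n_{s+t−1}} = {0, 1, ..., s + t − 1}; i.e., the first s + t terms of the sequence visit every integer of the interval [0, s + t − 1] exactly once. -/
/-- With coprime shifts `s, t`, the sequence taking `+s` steps (wrapping with `−t` at the
boundary) visits every integer of `{0, …, s+t−1}` among its first `s + t` terms. -/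
theorem sequence_covers_interval (s t : ℕ) (hco : Nat.Coprime s t) (hst : 1 ≤ s + t)
    (n : ℕ → ℤ) (h0 : n 0 = 0)
    (hstep : ∀ k, n (k + 1) =
      if n k + (s : ℤ) ≤ ((s : ℤ) + t) - 1 then n k + s else n k - t) :
    (Finset.range (s + t)).image n =
      (Finset.range (s + t)).image (fun i : ℕ => (i : ℤ)) := by
  set m : ℤ := (s : ℤ) + t with hm
  have hmpos : 0 < m := by simp only [hm]; exact_mod_cast hst
  have hsle : (s : ℤ) ≤ m := by rw [hm]; have : (0:ℤ) ≤ t := Int.natCast_nonneg t; omega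
  -- key formula: n k = (k * s) % m
  have key : ∀ k, n k = ((k : ℤ) * s) % m := by
    intro k
    induction k with
    | zero => simpa using h0
    | succ k ih =>
      have hx0 : 0 ≤ ((k : ℤ) * s) % m := Int.emod_nonneg _ (by omega)
      have hx1 : ((k : ℤ) * s) % m < m := Int.emod_lt_of_pos _ hmpos
      set x : ℤ := ((k : ℤ) * s) % m with hxdef
      have hxm : x % m = x := by rw [hxdef]; exact Int.emod_emod_of_dvd _ dvd_rfl
      have hrw : (((k : ℕ) + 1 : ℕ) : ℤ) * s % m = (x + s) % m := by
        push_cast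
        rw [add_mul, one_mul, Int.add_emod, hxdef]
        conv_rhs => rw [Int.add_emod, ← hxdef, hxm]
      rw [hstep k, ih, hrw]
      by_cases hc : x + (s : ℤ) ≤ m - 1
      · rw [if_pos hc]
        exact (Int.emod_eq_of_lt (by omega) (by omega)).symm
      · rw [if_neg hc]
        have h1 : (x + (s:ℤ)) % m = (x + s - m) % m := by
          rw [Int.sub_emod, Int.emod_self, sub_zero, Int.emod_emod_of_dvd _ dvd_rfl]
        have h2 : x + (s:ℤ) - m = x - t := by rw [hm]; ring
        have ht0 : (0:ℤ) ≤ t := Int.natCast_nonneg t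
        rw [h1, h2, Int.emod_eq_of_lt (by omega) (by omega)]
  have hcop : IsCoprime (m : ℤ) (s : ℤ) := by
    have hco2 : Nat.Coprime (s + t) s := by
      unfold Nat.Coprime
      rw [Nat.add_comm, Nat.gcd_add_self_left]
      exact hco.symm
    rw [hm]
    exact_mod_cast Nat.isCoprime_iff_coprime.mpr hco2
  -- injectivity of n on range (s+t)
  have hinj : Set.InjOn n (Finset.range (s + t) : Set ℕ) := by
    intro a ha b hb hab
    simp only [Finset.coe_range, Set.mem_Iio] at ha hb
    rw [key a, key b] at hab
    have hdvd : m ∣ ((a : ℤ) - b) * s := by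
      have := Int.emod_emod_of_dvd ((a:ℤ)*s) (dvd_refl m)
      have h1 : ((a : ℤ) * s - (b : ℤ) * s) % m = 0 := by
        rw [Int.sub_emod, hab, sub_self, Int.zero_emod]
      have h2 : m ∣ (a : ℤ) * s - (b : ℤ) * s := Int.dvd_of_emod_eq_zero h1
      rwa [sub_mul]
    have hdvd2 : m ∣ ((a : ℤ) - b) := hcop.dvd_of_dvd_mul_right hdvd
    have ha' : (a : ℤ) < m := by rw [hm]; exact_mod_cast ha
    have hb' : (b : ℤ) < m := by rw [hm]; exact_mod_cast hb
    have ha0 : (0:ℤ) ≤ a := Int.natCast_nonneg a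
    have hb0 : (0:ℤ) ≤ b := Int.natCast_nonneg b
    have hlt : |(a : ℤ) - b| < m := by rw [abs_lt]; omega
    have : (a : ℤ) - b = 0 := Int.eq_zero_of_abs_lt_dvd hdvd2 hlt
    exact_mod_cast sub_eq_zero.mp this
  -- subset
  have hsub : (Finset.range (s + t)).image n ⊆
      (Finset.range (s + t)).image (fun i : ℕ => (i : ℤ)) := by
    intro x hx
    rw [Finset.mem_image] at hx ⊢
    obtain ⟨k, hk, rfl⟩ := hx
    have h0' : 0 ≤ n k := by rw [key k]; exact Int.emod_nonneg _ (by omega)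
    have h1' : n k < m := by rw [key k]; exact Int.emod_lt_of_pos _ hmpos
    refine ⟨(n k).toNat, ?_, by simp [Int.toNat_of_nonneg h0']⟩
    rw [Finset.mem_range]
    have : ((n k).toNat : ℤ) < m := by rwa [Int.toNat_of_nonneg h0']
    rw [hm] at this
    exact_mod_cast this
  have hcard : ((Finset.range (s + t)).image (fun i : ℕ => (i : ℤ))).card ≤
      ((Finset.range (s + t)).image n).card := by
    rw [Finset.card_image_of_injOn hinj,
      Finset.card_image_of_injective _ (fun a b => by exact_mod_cast id)]
  exact Finset.eq_of_subset_of_card_le hsub hcard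
end

section
/- Let N ∈ ℕ, V = {−⌊N/2⌋, ..., ⌊N/2⌋ − 1}, and let s, t ∈ ℕ be coprime with s + t ≤ N. Define a graph on vertex set V where i and j are adjacent iff |i − j| = s or |i − j| = t. Then this graph is connected; equivalently, every node of V is reachable from 0 by a path in the graph. -/
/-!
Put `n = s + t`. Since `s` is invertible mod `n`, the residues `(k s - 1) mod n` for
`k = 1, …, n - 1` run through `0, …, n - 2`, and consecutive ones differ by `s` or by
`s - n = -t`.
So every window of `n - 1` consecutive integers is connected by hops of size `s` and `t`.
As `V` has at least `n - 1` elements, any two consecutive elements of `V` lie in a common window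
inside `V` (when `s` or `t` is `1` they are adjacent anyway), hence `V` is connected.
-/

open SimpleGraph Set

namespace Int

theorem emod_add_eq_or {n d : ℤ} (x : ℤ) (hn : 0 < n) (hd0 : 0 ≤ d) (hdn : d ≤ n) :
    (x + d) % n = x % n + d ∨ (x + d) % n = x % n + d - n := by
  have := emod_nonneg x hn.ne'
  have := emod_lt_of_pos x hn
  rw [← emod_add_emod]
  rcases lt_or_ge (x % n + d) n with h | h
  · exact .inl (emod_eq_of_lt (by omega) h)
  · exact .inr (by rw [← sub_emod_right]; exact emod_eq_of_lt (by omega) (by omega))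

theorem mul_sub_one_emod_ne_sub_one {s n k : ℤ} (hsn : IsCoprime s n) (hk0 : 0 < k)
    (hkn : k < n) : (k * s - 1) % n ≠ n - 1 := by
  intro h
  have hks : n ∣ k * s := by
    have : k * s - 1 ≡ -1 [ZMOD n] := by
      rw [Int.ModEq, h, ← add_emod_right (-1), emod_eq_of_lt (by omega) (by omega)]; ring_nf
    simpa using (this.add_right 1).symm.dvd
  have := eq_zero_of_dvd_of_nonneg_of_lt hk0.le hkn (hsn.symm.dvd_of_dvd_mul_right hks)
  omega

theorem exists_mul_sub_one_emod_eq {s n y : ℤ} (hsn : IsCoprime s n) (hy0 : 0 ≤ y)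
    (hyn : y ≤ n - 2) : ∃ k, 0 < k ∧ k < n ∧ (k * s - 1) % n = y := by
  obtain ⟨u, v, huv⟩ := hsn
  have hn : 0 < n := by omega
  set k := (y + 1) * u % n with hk
  have hks : (k * s - 1) % n = y := by
    have : k * s - 1 = y + n * (-(y + 1) * v - (y + 1) * u / n * s) := by
      rw [hk, emod_def]; linear_combination (y + 1) * huv
    rw [this, add_mul_emod_self_left, emod_eq_of_lt hy0 (by omega)]
  refine ⟨k, ?_, emod_lt_of_pos _ hn, hks⟩
  rcases (emod_nonneg ((y + 1) * u) hn.ne').lt_or_eq with h | h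
  · exact h
  · rw [← hk] at h
    rw [← h, zero_mul, zero_sub, ← add_emod_right, emod_eq_of_lt (by omega) (by omega)] at hks
    omega

end Int

theorem Nat.Coprime.eq_one_or_eq_one_or_three_le_add {s t : ℕ} (h : Nat.Coprime s t) :
    s = 1 ∨ t = 1 ∨ 3 ≤ s + t := by
  by_contra! H
  obtain rfl | rfl : s = 0 ∨ t = 0 := by omega
  · exact H.2.1 (Nat.coprime_zero_left t |>.mp h)
  · exact H.1 (Nat.coprime_zero_right s |>.mp h)

namespace SimpleGraph

theorem Reachable.exists_adj_seq_of_induce {V : Type*} {G : SimpleGraph V} {S : Set V} {u w : S}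
    (h : (G.induce S).Reachable u w) :
    ∃ (m : ℕ) (v : ℕ → V), v 0 = u ∧ v m = w ∧ (∀ i ≤ m, v i ∈ S) ∧
      ∀ i < m, G.Adj (v i) (v (i + 1)) := by
  obtain ⟨p⟩ := h
  exact ⟨p.length, fun i => p.getVert i, by simp, by simp, fun i _ => (p.getVert i).2,
    fun i hi => p.adj_getVert_succ hi⟩

theorem preconnected_induce_Icc_of_reachable_succ {H : SimpleGraph ℤ} {lo hi : ℤ}
    (h : ∀ x (hx : x ∈ Icc lo hi) (hx' : x + 1 ∈ Icc lo hi),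
      (H.induce (Icc lo hi)).Reachable ⟨x, hx⟩ ⟨x + 1, hx'⟩) :
    (H.induce (Icc lo hi)).Preconnected := by
  suffices hle : ∀ y z : Icc lo hi, y ≤ z → (H.induce (Icc lo hi)).Reachable y z by
    intro y z
    rcases le_total y z with hyz | hzy
    · exact hle y z hyz
    · exact (hle z y hzy).symm
  rintro ⟨y, hy⟩ ⟨z, hz⟩ (hyz : y ≤ z)
  induction z, hyz using Int.leInduction with
  | base => rfl
  | succ z hyz ih =>
    have hz' : z ∈ Icc lo hi := ⟨hy.1.trans hyz, by linarith [hz.2]⟩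
    exact (ih hz').trans (h z hz' hz)

theorem reachable_induce_circulantGraph_of_sub_mem {α : Type*} [AddGroup α] {D S : Set α}
    {u w : S} (h : (w : α) - u ∈ D ∨ (u : α) - w ∈ D) :
    ((circulantGraph D).induce S).Reachable u w := by
  by_cases huw : u = w
  · rw [huw]
  · exact Adj.reachable
      (by simpa [circulantGraph_adj, Subtype.coe_ne_coe, huw] using h.symm)

end SimpleGraph

theorem abs_sub_eq_of_circulantGraph_adj {s t : ℕ} {a b : ℤ}
    (h : (circulantGraph {(s : ℤ), (t : ℤ)}).Adj a b) : |b - a| = s ∨ |b - a| = t := by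
  rw [circulantGraph_adj] at h
  obtain ⟨-, hab | hba⟩ := h
  · rw [abs_sub_comm]
    rcases hab with h | h <;> rw [h] <;> simp
  · rcases hba with h | h <;> rw [h] <;> simp

section

variable {s t : ℕ}

theorem preconnected_induce_circulantGraph_window (hco : Nat.Coprime s t) (a : ℤ) :
    ((circulantGraph {(s : ℤ), (t : ℤ)}).induce (Icc a (a + s + t - 2))).Preconnected := by
  set n : ℤ := s + t
  have hsn : IsCoprime (s : ℤ) n := by
    simpa using Nat.isCoprime_iff_coprime.2 (Nat.coprime_self_add_right.2 hco)
  obtain ⟨g, hg⟩ : ∃ g : ℤ → ℤ, ∀ k, g k = a + (k * s - 1) % n :=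
    ⟨_, fun _ => rfl⟩
  have hg_mem : ∀ k, 0 < k → k < n → g k ∈ Icc a (a + s + t - 2) := by
    intro k hk0 hkn
    have := Int.emod_nonneg (k * s - 1) (show n ≠ 0 by omega)
    have := Int.emod_lt_of_pos (k * s - 1) (show 0 < n by omega)
    have := Int.mul_sub_one_emod_ne_sub_one hsn hk0 hkn
    rw [hg]
    constructor <;> omega
  have hg_reach : ∀ k (hk0 : 0 < k) (hkn : k < n),
      ((circulantGraph {(s : ℤ), (t : ℤ)}).induce (Icc a (a + s + t - 2))).Reachable
        ⟨g 1, hg_mem 1 one_pos (by omega)⟩ ⟨g k, hg_mem k hk0 hkn⟩ := by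
    intro k hk0
    induction k, hk0 using Int.leInduction with
    | base => intro; rfl
    | succ k hk ih =>
      intro hkn
      have hstep :=
        Int.emod_add_eq_or (k * s - 1) (show 0 < n by omega) s.cast_nonneg (by omega)
      rw [show k * s - 1 + s = (k + 1) * s - 1 by ring] at hstep
      refine (ih (by omega)).trans (reachable_induce_circulantGraph_of_sub_mem ?_)
      rcases hstep with h | h
      · exact .inl (by simp [hg, h])
      · exact .inr (by simp only [hg, h, mem_insert_iff, mem_singleton_iff]; omega)
  rintro ⟨y, hy⟩ ⟨z, hz⟩
  have ⟨hy1, hy2⟩ := hy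
  have ⟨hz1, hz2⟩ := hz
  obtain ⟨k, hk0, hkn, rfl⟩ : ∃ k, 0 < k ∧ k < n ∧ g k = y := by
    obtain ⟨k, hk0, hkn, hk⟩ :=
      Int.exists_mul_sub_one_emod_eq hsn (y := y - a) (by omega) (by omega)
    exact ⟨k, hk0, hkn, by rw [hg, hk]; omega⟩
  obtain ⟨l, hl0, hln, rfl⟩ : ∃ l, 0 < l ∧ l < n ∧ g l = z := by
    obtain ⟨l, hl0, hln, hl⟩ :=
      Int.exists_mul_sub_one_emod_eq hsn (y := z - a) (by omega) (by omega)
    exact ⟨l, hl0, hln, by rw [hg, hl]; omega⟩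
  exact (hg_reach k hk0 hkn).symm.trans (hg_reach l hl0 hln)

theorem reachable_succ_induce_circulantGraph_Icc {lo hi : ℤ} (hco : Nat.Coprime s t)
    (hlen : (s : ℤ) + t ≤ hi - lo + 2) (x : ℤ) (hx : x ∈ Icc lo hi)
    (hx' : x + 1 ∈ Icc lo hi) :
    ((circulantGraph {(s : ℤ), (t : ℤ)}).induce (Icc lo hi)).Reachable
      ⟨x, hx⟩ ⟨x + 1, hx'⟩ := by
  rcases hco.eq_one_or_eq_one_or_three_le_add with hs | ht | h3
  · exact reachable_induce_circulantGraph_of_sub_mem (.inl (by simp [hs]))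
  · exact reachable_induce_circulantGraph_of_sub_mem (.inl (by simp [ht]))
  · have ⟨hx1, hx2⟩ := hx
    have ⟨hx1', hx2'⟩ := hx'
    set a := min x (hi + 2 - s - t)
    have hsub : Icc a (a + s + t - 2) ⊆ Icc lo hi := Icc_subset_Icc (by omega) (by omega)
    exact (preconnected_induce_circulantGraph_window hco a ⟨x, by omega, by omega⟩
      ⟨x + 1, by omega, by omega⟩).map (induceHomOfLE _ hsub).toHom

theorem preconnected_induce_circulantGraph_Icc {lo hi : ℤ} (hco : Nat.Coprime s t)
    (hlen : (s : ℤ) + t ≤ hi - lo + 2) :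
    ((circulantGraph {(s : ℤ), (t : ℤ)}).induce (Icc lo hi)).Preconnected :=
  preconnected_induce_Icc_of_reachable_succ (reachable_succ_induce_circulantGraph_Icc hco hlen)

end

/-- Connectivity via co-prime shifts: if `gcd(s,t) = 1` and `s + t ≤ N`, then every node of
`V = {−⌊N/2⌋, …, ⌊N/2⌋ − 1}` is reachable from `0` by hops of size `s` or `t` staying in `V`. -/
theorem connectivity_coprime_shifts (N s t : ℕ) (hco : Nat.Coprime s t) (hst : s + t ≤ N)
    (x : ℤ) (hx1 : -((N / 2 : ℕ) : ℤ) ≤ x) (hx2 : x ≤ ((N / 2 : ℕ) : ℤ) - 1) :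
    ∃ (m : ℕ) (v : ℕ → ℤ), v 0 = 0 ∧ v m = x ∧
      (∀ i ≤ m, -((N / 2 : ℕ) : ℤ) ≤ v i ∧ v i ≤ ((N / 2 : ℕ) : ℤ) - 1) ∧
      (∀ i < m, |v (i + 1) - v i| = s ∨ |v (i + 1) - v i| = t) := by
  have hreach := preconnected_induce_circulantGraph_Icc hco (by omega)
    ⟨0, by omega, by omega⟩ ⟨x, hx1, hx2⟩
  obtain ⟨m, v, hv0, hvm, hvV, hvadj⟩ := hreach.exists_adj_seq_of_induce
  exact ⟨m, v, hv0, hvm, hvV, fun i hi => abs_sub_eq_of_circulantGraph_adj (hvadj i hi)⟩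
end

section
/- Let k ≥ 1 and h ≥ k be natural numbers. Then the union over all integers u with |u| ≤ h of the sets { u·k + v : v ∈ ℤ, ⌈(u−h)/2⌉ ≤ v ≤ ⌊(u+h)/2⌋ } equals the integer interval [−h(k+1), h(k+1)]. -/
/-- For `1 ≤ k ≤ h`, the union of the intervals
`I_u = {u·k + v : ⌈(u−h)/2⌉ ≤ v ≤ ⌊(u+h)/2⌋}` over `|u| ≤ h` is exactly the integer
interval `[−h(k+1), h(k+1)]`. -/
theorem interval_union (k h : ℕ) (hk : 1 ≤ k) (hkh : k ≤ h) :
    {n : ℤ | ∃ u v : ℤ, |u| ≤ (h : ℤ) ∧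
        ⌈((u - h : ℚ)) / 2⌉ ≤ v ∧ v ≤ ⌊((u + h : ℚ)) / 2⌋ ∧ n = u * k + v} =
      Set.Icc (-(h * (k + 1) : ℤ)) ((h : ℤ) * (k + 1)) := by
  have hk' : (1 : ℤ) ≤ (k : ℤ) := by exact_mod_cast hk
  have hkh' : (k : ℤ) ≤ (h : ℤ) := by exact_mod_cast hkh
  ext n
  simp only [Set.mem_setOf_eq, Set.mem_Icc]
  constructor
  · rintro ⟨u, v, hu, hc, hf, rfl⟩
    rw [Int.ceil_le] at hc
    rw [Int.le_floor] at hf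
    have h1 : u - (h : ℤ) ≤ 2 * v := by
      have : (u - h : ℚ) ≤ 2 * v := by linarith
      exact_mod_cast this
    have h2 : 2 * v ≤ u + (h : ℤ) := by
      have : (2 * v : ℚ) ≤ u + h := by linarith
      exact_mod_cast this
    rw [abs_le] at hu
    constructor
    · nlinarith [hu.1, hu.2]
    · nlinarith [hu.1, hu.2]
  · rintro ⟨h1, h2⟩
    set q : ℤ := (2 * n + h) / (2 * k + 1) with hq
    have hd : (0 : ℤ) < 2 * k + 1 := by linarith
    have hq1 : q * (2 * k + 1) ≤ 2 * n + h := Int.ediv_mul_le _ (by positivity)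
    have hq2 : 2 * n + h < (q + 1) * (2 * k + 1) := Int.lt_ediv_add_one_mul_self _ hd
    set u : ℤ := min (h : ℤ) q with hu
    have hub : u ≤ (h : ℤ) := min_le_left _ _
    have hlb : -(h : ℤ) ≤ u := by
      refine le_min (by linarith) ?_
      by_contra hcon
      push_neg at hcon
      have hq' : q + 1 ≤ -(h : ℤ) := by linarith
      have : (q + 1) * (2 * k + 1) ≤ -(h : ℤ) * (2 * k + 1) :=
        mul_le_mul_of_nonneg_right hq' (by linarith)
      nlinarith
    have key1 : u * (2 * k + 1) ≤ 2 * n + h := by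
      have : u ≤ q := min_le_right _ _
      have := mul_le_mul_of_nonneg_right this (le_of_lt hd)
      linarith
    have key2 : 2 * n - h ≤ u * (2 * k + 1) := by
      rcases le_or_gt (h : ℤ) q with hc | hc
      · have huh : u = (h : ℤ) := min_eq_left hc
        rw [huh]; nlinarith
      · have huq : u = q := min_eq_right (le_of_lt hc)
        rw [huq]; nlinarith
    refine ⟨u, n - u * k, abs_le.mpr ⟨hlb, hub⟩, ?_, ?_, by ring⟩
    · rw [Int.ceil_le]
      have : (u : ℤ) - h ≤ 2 * (n - u * k) := by nlinarith
      have : ((u : ℚ) - h) ≤ 2 * ((n : ℚ) - u * k) := by exact_mod_cast this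
      push_cast
      linarith
    · rw [Int.le_floor]
      have : 2 * (n - u * k) ≤ (u : ℤ) + h := by nlinarith
      have : 2 * ((n : ℚ) - u * k) ≤ (u : ℚ) + h := by exact_mod_cast this
      push_cast
      linarith
end

section
/- Let N ≥ 2, k* = ⌊√(N/2)⌋, and h* = ⌈(−1 + √(2N − 1))/2⌉. Then h* ≥ k*, and moreover h*·(k* + 1) ≥ ⌊N/2⌋. -/
/-- For `N ≥ 2`, with `k* = ⌊√(N/2)⌋` and `h* = ⌈(−1 + √(2N − 1))/2⌉`, one has
`h* ≥ k*` and `h*·(k* + 1) ≥ ⌊N/2⌋`. -/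
theorem optimal_shift_bounds (N : ℕ) (hN : 2 ≤ N) :
    ⌈((-1 + Real.sqrt (2 * N - 1)) / 2 : ℝ)⌉ ≥ ⌊Real.sqrt ((N : ℝ) / 2)⌋ ∧
      ⌈((-1 + Real.sqrt (2 * N - 1)) / 2 : ℝ)⌉ * (⌊Real.sqrt ((N : ℝ) / 2)⌋ + 1) ≥
        ((N / 2 : ℕ) : ℤ) := by
  have hN2 : (2 : ℝ) ≤ (N : ℝ) := by exact_mod_cast hN
  set a : ℤ := ⌊Real.sqrt ((N : ℝ) / 2)⌋ with ha
  set b : ℤ := ⌈((-1 + Real.sqrt (2 * N - 1)) / 2 : ℝ)⌉ with hb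
  have hs2 : (0:ℝ) ≤ 2 * N - 1 := by linarith
  have hNd : (0:ℝ) ≤ (N:ℝ)/2 := by linarith
  -- a ≥ 1
  have ha1 : 1 ≤ a := by
    rw [ha, Int.le_floor]
    push_cast
    rw [show (1:ℝ) = Real.sqrt 1 by simp]
    exact Real.sqrt_le_sqrt (by linarith)
  have haR : (a:ℝ) ≤ Real.sqrt ((N:ℝ)/2) := Int.floor_le _
  have haR2 : Real.sqrt ((N:ℝ)/2) < (a:ℝ) + 1 := Int.lt_floor_add_one _
  have ha0 : (0:ℝ) ≤ (a:ℝ) := by exact_mod_cast (by linarith : (0:ℤ) ≤ a)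
  -- 2 a² ≤ N
  have hA1 : 2 * a^2 ≤ (N:ℤ) := by
    have h1 : (a:ℝ)^2 ≤ (N:ℝ)/2 := by
      have := mul_self_le_mul_self ha0 haR
      rwa [Real.mul_self_sqrt hNd, ← pow_two] at this
    have : (2:ℝ) * (a:ℝ)^2 ≤ (N:ℝ) := by linarith
    exact_mod_cast this
  -- N + 1 ≤ 2 (a+1)²
  have hA2 : (N:ℤ) < 2 * (a+1)^2 := by
    have h1 : (N:ℝ)/2 < ((a:ℝ)+1)^2 := by
      have := mul_self_lt_mul_self (Real.sqrt_nonneg _) haR2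
      rwa [Real.mul_self_sqrt hNd, ← pow_two] at this
    have : (N:ℝ) < 2 * ((a:ℝ)+1)^2 := by linarith
    exact_mod_cast this
  -- b ≥ 1
  have hb1 : 1 ≤ b := by
    have h0 : ((0:ℤ):ℝ) < (-1 + Real.sqrt (2 * N - 1)) / 2 := by
      push_cast
      nlinarith [Real.sq_sqrt hs2, Real.sqrt_nonneg (2*(N:ℝ)-1)]
    have := Int.lt_ceil.mpr h0
    rw [← hb] at this
    omega
  have hbR : ((-1 + Real.sqrt (2 * N - 1)) / 2 : ℝ) ≤ (b:ℝ) := Int.le_ceil _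
  have hbR2 : (b:ℝ) - 1 < ((-1 + Real.sqrt (2 * N - 1)) / 2 : ℝ) := by
    have := Int.ceil_lt_add_one ((-1 + Real.sqrt (2 * N - 1)) / 2 : ℝ)
    rw [← hb] at this; linarith
  -- 2b²+2b+1 ≥ N
  have hB1 : (N:ℤ) ≤ 2*b^2 + 2*b + 1 := by
    have hs : Real.sqrt (2 * N - 1) ≤ 2*(b:ℝ) + 1 := by linarith
    have h1 : 2 * (N:ℝ) - 1 ≤ (2*(b:ℝ)+1)^2 := by
      have := mul_self_le_mul_self (Real.sqrt_nonneg _) hs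
      rwa [Real.mul_self_sqrt hs2, ← pow_two] at this
    have : (N:ℝ) ≤ 2*(b:ℝ)^2 + 2*(b:ℝ) + 1 := by nlinarith
    exact_mod_cast this
  -- 2b²-2b+1 < N
  have hB2 : 2*b^2 - 2*b + 1 < (N:ℤ) := by
    have hs : 2*(b:ℝ) - 1 < Real.sqrt (2 * N - 1) := by linarith
    have hbp : (0:ℝ) ≤ 2*(b:ℝ) - 1 := by
      have : (1:ℝ) ≤ (b:ℝ) := by exact_mod_cast hb1
      linarith
    have h1 : (2*(b:ℝ)-1)^2 < 2 * (N:ℝ) - 1 := by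
      have := mul_self_lt_mul_self hbp hs
      rwa [Real.mul_self_sqrt hs2, ← pow_two] at this
    have : 2*(b:ℝ)^2 - 2*(b:ℝ) + 1 < (N:ℝ) := by nlinarith
    exact_mod_cast this
  -- b ≥ a
  have hba : a ≤ b := by nlinarith
  refine ⟨hba, ?_⟩
  -- floor N/2 bounds
  have hM1 : 2 * ((N / 2 : ℕ) : ℤ) ≤ (N:ℤ) := by
    exact_mod_cast (by omega : 2 * (N/2) ≤ N)
  have hM2 : (N:ℤ) ≤ 2 * ((N / 2 : ℕ) : ℤ) + 1 := by
    exact_mod_cast (by omega : N ≤ 2 * (N/2) + 1)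
  set M : ℤ := ((N / 2 : ℕ) : ℤ)
  rcases hba.lt_or_eq with h | h
  · have h' : a + 1 ≤ b := h
    have hpos : (0:ℤ) ≤ a + 1 := by omega
    nlinarith [mul_le_mul_of_nonneg_right h' hpos]
  · have h1 : M < b^2 + b + 1 := by nlinarith
    have h2 : M ≤ b^2 + b := Int.lt_add_one_iff.mp h1
    nlinarith [h, h2]
end

section
/- Let N ≥ 2, k = ⌊√(N/2)⌋, and h = ⌈(−1 + √(2N − 1))/2⌉. Then every integer n with −⌊N/2⌋ ≤ n ≤ ⌊N/2⌋ − 1 can be written as n = α·k + β·(k + 1) for some integers α, β with |α| + |β| ≤ h. -/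
set_option maxHeartbeats 1000000

/-- Key integer lemma: if `1 ≤ k ≤ h` and `M ≤ h*(k+1)`, then every `m ∈ [0, M]`
is `α*k + β*(k+1)` with `|α| + |β| ≤ h`. -/
lemma shift_key (k h M : ℤ) (hk : 1 ≤ k) (hkh : k ≤ h) (hMh : M ≤ h * (k + 1))
    (m : ℤ) (hm0 : 0 ≤ m) (hmM : m ≤ M) :
    ∃ α β : ℤ, |α| + |β| ≤ h ∧ m = α * k + β * (k + 1) := by
  set q := (2 * m + k) / (2 * k + 1) with hqdef
  have hkpos : (0 : ℤ) < 2 * k + 1 := by linarith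
  have hdm : (2 * k + 1) * q + (2 * m + k) % (2 * k + 1) = 2 * m + k :=
    Int.mul_ediv_add_emod _ _
  have hr0 : 0 ≤ (2 * m + k) % (2 * k + 1) := Int.emod_nonneg _ (by omega)
  have hrlt : (2 * m + k) % (2 * k + 1) < 2 * k + 1 := Int.emod_lt_of_pos _ hkpos
  have hq0 : 0 ≤ q := Int.ediv_nonneg (by linarith) (by linarith)
  set t := min q h with htdef
  have ht0 : 0 ≤ t := le_min hq0 (by linarith)
  have hth : t ≤ h := min_le_right _ _
  refine ⟨t - (m - t * k), m - t * k, ?_, by ring⟩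
  have key1 : t - 2 * (m - t * k) ≤ h := by
    rcases le_total q h with hqh | hhq
    · have ht : t = q := min_eq_left hqh
      rw [ht]; nlinarith
    · have ht : t = h := min_eq_right hhq
      have hmul : (2 * k + 1) * h ≤ (2 * k + 1) * q :=
        mul_le_mul_of_nonneg_left hhq (by linarith)
      rw [ht]; nlinarith
  have key2 : -h ≤ t - 2 * (m - t * k) := by
    rcases le_total q h with hqh | hhq
    · have ht : t = q := min_eq_left hqh
      rw [ht]; nlinarith
    · have ht : t = h := min_eq_right hhq
      rw [ht]; nlinarith
  rcases abs_cases (t - (m - t * k)) with ⟨hA, hA'⟩ | ⟨hA, hA'⟩ <;>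
    rcases abs_cases (m - t * k) with ⟨hB, hB'⟩ | ⟨hB, hB'⟩ <;>
      rw [hA, hB] <;> linarith

/-- Optimal shift pair: for `N ≥ 2`, `k = ⌊√(N/2)⌋` and `h = ⌈(−1 + √(2N − 1))/2⌉`, every
node `n ∈ {−⌊N/2⌋, …, ⌊N/2⌋ − 1}` can be written `n = α·k + β·(k+1)` with `|α| + |β| ≤ h`. -/
theorem optimal_shift_pair (N : ℕ) (hN : 2 ≤ N)
    (n : ℤ) (hn1 : -((N / 2 : ℕ) : ℤ) ≤ n) (hn2 : n ≤ ((N / 2 : ℕ) : ℤ) - 1) :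
    ∃ α β : ℤ, |α| + |β| ≤ ⌈((-1 + Real.sqrt (2 * N - 1)) / 2 : ℝ)⌉ ∧
      n = α * ⌊Real.sqrt ((N : ℝ) / 2)⌋ + β * (⌊Real.sqrt ((N : ℝ) / 2)⌋ + 1) := by
  set k : ℤ := ⌊Real.sqrt ((N : ℝ) / 2)⌋ with hkdef
  set h : ℤ := ⌈((-1 + Real.sqrt (2 * N - 1)) / 2 : ℝ)⌉ with hhdef
  have hN2 : (2 : ℝ) ≤ (N : ℝ) := by exact_mod_cast hN
  have hN2' : (0 : ℝ) ≤ (N : ℝ) / 2 := by linarith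
  have hsqnn : (0 : ℝ) ≤ Real.sqrt ((N : ℝ) / 2) := Real.sqrt_nonneg _
  have hsq1 : (1 : ℝ) ≤ Real.sqrt ((N : ℝ) / 2) := by
    nlinarith [Real.sq_sqrt hN2']
  have hk1 : 1 ≤ k := by
    rw [hkdef]; exact Int.le_floor.mpr (by exact_mod_cast hsq1)
  have hfl : (k : ℝ) ≤ Real.sqrt ((N : ℝ) / 2) := Int.floor_le _
  have hfu : Real.sqrt ((N : ℝ) / 2) < (k : ℝ) + 1 := Int.lt_floor_add_one _
  have hk2 : 2 * k ^ 2 ≤ (N : ℤ) := by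
    have hk0 : (0 : ℝ) ≤ (k : ℝ) := by exact_mod_cast (by linarith : (0:ℤ) ≤ k)
    have h1 : ((k : ℝ)) ^ 2 ≤ (N : ℝ) / 2 := by
      nlinarith [Real.sq_sqrt hN2']
    have : (2 * (k : ℝ) ^ 2 : ℝ) ≤ (N : ℝ) := by linarith
    exact_mod_cast this
  have hk3 : (N : ℤ) < 2 * (k + 1) ^ 2 := by
    have h1 : (N : ℝ) / 2 < ((k : ℝ) + 1) ^ 2 := by
      nlinarith [Real.sq_sqrt hN2']
    have : (N : ℝ) < 2 * ((k : ℝ) + 1) ^ 2 := by linarith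
    exact_mod_cast this
  have hs0 : (0 : ℝ) ≤ 2 * (N : ℝ) - 1 := by linarith
  have hceil : ((-1 + Real.sqrt (2 * N - 1)) / 2 : ℝ) ≤ (h : ℝ) := by
    rw [hhdef]; exact Int.le_ceil _
  have hsn : (0 : ℝ) ≤ Real.sqrt (2 * (N : ℝ) - 1) := Real.sqrt_nonneg _
  have hh0 : 0 ≤ h := by
    rw [hhdef]
    apply Int.ceil_nonneg
    nlinarith [Real.sq_sqrt hs0]
  have hh1 : (N : ℤ) ≤ 2 * h ^ 2 + 2 * h + 1 := by
    have h2 : Real.sqrt (2 * N - 1) ≤ 2 * (h : ℝ) + 1 := by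
      push_cast at hceil ⊢; linarith
    have h3 : 2 * (N : ℝ) - 1 ≤ (2 * (h : ℝ) + 1) ^ 2 := by
      nlinarith [Real.sq_sqrt hs0]
    have h4 : (2 * (N : ℤ) - 1 : ℤ) ≤ (2 * h + 1) ^ 2 := by exact_mod_cast h3
    nlinarith [h4]
  have hkh : k ≤ h := by nlinarith [hk2, hh1, hh0, hk1]
  have hMN : 2 * ((N / 2 : ℕ) : ℤ) ≤ (N : ℤ) := by
    have : 2 * (N / 2) ≤ N := by omega
    exact_mod_cast this
  have hMh : ((N / 2 : ℕ) : ℤ) ≤ h * (k + 1) := by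
    rcases le_or_gt h k with hc | hc
    · have hhk : h * h ≤ h * k := mul_le_mul_of_nonneg_left hc hh0
      have hN' : (N : ℤ) ≤ 2 * (h * (k + 1)) + 1 := by nlinarith [hhk, hh1]
      have : ((N / 2 : ℕ) : ℤ) < h * (k + 1) + 1 := by linarith
      linarith [Int.lt_add_one_iff.mp this]
    · have hhk : (k + 1) * (k + 1) ≤ h * (k + 1) :=
        mul_le_mul_of_nonneg_right hc (by linarith)
      have hN' : (N : ℤ) ≤ 2 * (h * (k + 1)) := by nlinarith [hhk, hk3]
      linarith
  rcases le_or_gt 0 n with hn0 | hn0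
  · exact shift_key k h _ hk1 hkh hMh n hn0 (by linarith)
  · obtain ⟨α, β, hb, he⟩ := shift_key k h _ hk1 hkh hMh (-n) (by linarith) (by linarith)
    exact ⟨-α, -β, by simpa [abs_neg] using hb, by linarith⟩
end
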